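/- arXiv:2107.00760 — 2 statements merged into one kernel-verified Lean document; each statement's English description precedes it below -/
import Mathlib

section
/- For 0 < α < 1 and ε > 0, the double integral ∫_ε^∞ ∫₀^∞ (u/√(2πz³)) e^{−u²/(2z)} · (α/u^{1+α}) du dz equals (Γ((1−α)/2)/√(π·2^α)) · ε^{−α/2}. -/
open MeasureTheory Real Set

/-- For `0 < α < 1` and `ε > 0`,
`∫_ε^∞ ∫₀^∞ (u/√(2πz³)) e^{-u²/(2z)} · (α/u^{1+α}) du dz
  = (Γ((1-α)/2)/√(π·2^α)) · ε^{-α/2}`. -/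
theorem stmt2 (α ε : ℝ) (hα : 0 < α) (hα1 : α < 1) (hε : 0 < ε) :
    ∫ z in Set.Ioi ε, ∫ u in Set.Ioi (0:ℝ),
        (u / Real.sqrt (2 * Real.pi * z ^ 3)) * Real.exp (-(u ^ 2) / (2 * z)) *
          (α / u ^ (1 + α)) =
      Real.Gamma ((1 - α) / 2) / Real.sqrt (Real.pi * 2 ^ α) * ε ^ (-(α / 2)) := by
  set K : ℝ := α * Real.Gamma ((1 - α) / 2) * 2 ^ ((1 - α) / 2) /
      (2 * Real.sqrt (2 * Real.pi)) with hK
  have hπ : (0:ℝ) < Real.pi := Real.pi_pos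
  -- inner integral
  have hinner : ∀ z ∈ Set.Ioi ε,
      (∫ u in Set.Ioi (0:ℝ),
        (u / Real.sqrt (2 * Real.pi * z ^ 3)) * Real.exp (-(u ^ 2) / (2 * z)) *
          (α / u ^ (1 + α))) = K * z ^ (-(1 + α / 2)) := by
    intro z hz
    have hz0 : (0:ℝ) < z := hε.trans hz
    have hb : (0:ℝ) < 1 / (2 * z) := by positivity
    have step1 : (∫ u in Set.Ioi (0:ℝ),
        (u / Real.sqrt (2 * Real.pi * z ^ 3)) * Real.exp (-(u ^ 2) / (2 * z)) *
          (α / u ^ (1 + α))) =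
        ∫ u in Set.Ioi (0:ℝ), (α / Real.sqrt (2 * Real.pi * z ^ 3)) *
          (u ^ (-α) * Real.exp (-(1 / (2 * z)) * u ^ (2:ℝ))) := by
      refine setIntegral_congr_fun measurableSet_Ioi (fun u hu => ?_)
      have hu : (0:ℝ) < u := hu
      have h2 : u ^ (2:ℝ) = u ^ (2:ℕ) := by
        rw [show ((2:ℝ)) = ((2:ℕ):ℝ) by norm_num, Real.rpow_natCast]
      have key : u ^ (-α) = u * u ^ (-(1 + α)) := by
        rw [show -α = 1 + -(1 + α) by ring, Real.rpow_add hu, Real.rpow_one]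
      rw [h2, key, Real.rpow_neg hu.le, div_eq_mul_inv α]
      have hexp : -(u ^ 2) / (2 * z) = -(1 / (2 * z)) * u ^ 2 := by
        field_simp
      rw [hexp]
      ring
    rw [step1, MeasureTheory.integral_const_mul,
      integral_rpow_mul_exp_neg_mul_rpow (by norm_num) (by linarith : (-1:ℝ) < -α) hb]
    have e1 : -(-α + 1) / 2 = -((1 - α) / 2) := by ring
    have e2 : (-α + 1) / 2 = (1 - α) / 2 := by ring
    rw [e1, e2]
    have h2z : (1 / (2 * z)) ^ (-((1 - α) / 2)) = 2 ^ ((1 - α) / 2) * z ^ ((1 - α) / 2) := by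
      rw [one_div, Real.inv_rpow (by positivity), Real.rpow_neg (by positivity), inv_inv,
        Real.mul_rpow (by norm_num) hz0.le]
    have hsqrt : Real.sqrt (2 * Real.pi * z ^ 3) = Real.sqrt (2 * Real.pi) * z ^ ((3:ℝ) / 2) := by
      rw [Real.sqrt_mul (by positivity), Real.sqrt_eq_rpow (z ^ 3), ← Real.rpow_natCast z 3,
        ← Real.rpow_mul hz0.le]
      norm_num
    rw [h2z, hsqrt]
    have hzsplit : z ^ ((1 - α) / 2) = z ^ (-(1 + α / 2)) * z ^ ((3:ℝ) / 2) := by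
      rw [← Real.rpow_add hz0]
      ring_nf
    rw [hzsplit, hK]
    have hs : Real.sqrt (2 * Real.pi) ≠ 0 := by positivity
    have hz32 : z ^ ((3:ℝ)/2) ≠ 0 := by positivity
    field_simp
  rw [setIntegral_congr_fun measurableSet_Ioi hinner, MeasureTheory.integral_const_mul,
    integral_Ioi_rpow_of_lt (by linarith) hε]
  have e3 : -(1 + α / 2) + 1 = -(α / 2) := by ring
  rw [e3, hK]
  -- remaining scalar identity
  have hsq : Real.sqrt (Real.pi * 2 ^ α) = Real.sqrt Real.pi * 2 ^ (α / 2) := by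
    rw [Real.sqrt_mul hπ.le, Real.sqrt_eq_rpow (2 ^ α), ← Real.rpow_mul (by norm_num)]
    ring_nf
  have h2π : Real.sqrt (2 * Real.pi) = 2 ^ ((1:ℝ)/2) * Real.sqrt Real.pi := by
    rw [Real.sqrt_mul (by norm_num), Real.sqrt_eq_rpow 2]
  have hpow : (2:ℝ) ^ ((1 - α) / 2) * 2 ^ (α / 2) = 2 ^ ((1:ℝ)/2) := by
    rw [← Real.rpow_add (by norm_num)]
    ring_nf
  have h1 : (0:ℝ) < 2 ^ ((1:ℝ)/2) := by positivity
  have h2 : (0:ℝ) < 2 ^ (α / 2) := by positivity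
  have h4 : (0:ℝ) < Real.sqrt Real.pi := Real.sqrt_pos.mpr hπ
  have key : (2:ℝ) ^ ((1 - α) / 2) = 2 ^ ((1:ℝ)/2) / 2 ^ (α / 2) := by
    rw [eq_div_iff h2.ne', hpow]
  rw [hsq, h2π, key]
  field_simp
end

section
/- Let (S*(n), T(n)) be defined by S*(0)=0, T(0)=1, S*(n+1)=S*(n)+ξ_{n+1−T(n)} if S*(n)>0 and S*(n+1)=η_{T(n)} if S*(n)≤0, with T(n+1)=1+#{1≤k≤n : S*(k)≤0}. Let λ(n)=inf{k∈ℕ : k−T(k)≥n and S*(k)>0}. Then λ(n) − T(λ(n)) = n for all n ∈ ℕ₀. -/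
/-- In the perturbed random walk model (`S* = S`, `T` as in the paper) with positive
refill values `η_k`, the time change `λ(n) = inf{k ∈ ℕ : k - T(k) ≥ n, S*(k) > 0}`
satisfies `λ(n) - T(λ(n)) = n` for all `n ∈ ℕ₀`. -/
theorem stmt15 (ξ η : ℕ → ℝ) (hη : ∀ k, 0 < η k)
    (S : ℕ → ℝ) (T : ℕ → ℕ)
    (hS0 : S 0 = 0) (hT0 : T 0 = 1)
    (hSrec : ∀ n, S (n + 1) = if 0 < S n then S n + ξ (n + 1 - T n) else η (T n))
    (hTrec : ∀ n, T (n + 1) = 1 + ((Finset.Icc 1 n).filter (fun k => S k ≤ 0)).card)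
    (lam : ℕ → ℕ)
    (hlam : ∀ n, lam n = sInf {k : ℕ | 1 ≤ k ∧ n ≤ k - T k ∧ 0 < S k}) :
    ∀ n : ℕ, lam n - T (lam n) = n := by
  classical
  set P : ℕ → Finset ℕ := fun m => (Finset.Icc 1 m).filter (fun j => 0 < S j) with hP
  -- key : (m+1) - T (m+1) = (P m).card, and T (m+1) ≤ m + 1
  have key : ∀ m : ℕ, (m + 1) - T (m + 1) = (P m).card ∧ T (m + 1) ≤ m + 1 := by
    intro m
    have hsum := Finset.card_filter_add_card_filter_not
      (s := Finset.Icc 1 m) (p := fun j => 0 < S j)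
    have hneg : (Finset.Icc 1 m).filter (fun j => ¬ 0 < S j)
        = (Finset.Icc 1 m).filter (fun j => S j ≤ 0) := by
      apply Finset.filter_congr; intro j _; simp [not_lt]
    rw [hneg] at hsum
    have hcard : (Finset.Icc 1 m).card = m := by simp
    have hT := hTrec m
    simp only [hP]
    constructor <;> omega
  -- stepcard
  have hIcc : ∀ m : ℕ, Finset.Icc 1 (m + 1) = insert (m + 1) (Finset.Icc 1 m) := by
    intro m
    ext i
    simp only [Finset.mem_Icc, Finset.mem_insert]
    omega
  have steppos : ∀ m : ℕ, 0 < S (m + 1) → (P (m + 1)).card = (P m).card + 1 := by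
    intro m hm
    have hnot : (m + 1) ∉ P m := by simp [hP]
    simp only [hP, hIcc m, Finset.filter_insert, if_pos hm]
    rw [Finset.card_insert_of_notMem hnot]
  have stepneg : ∀ m : ℕ, ¬ 0 < S (m + 1) → (P (m + 1)).card = (P m).card := by
    intro m hm
    simp only [hP, hIcc m, Finset.filter_insert, if_neg hm]
  have hS1 : 0 < S 1 := by
    have := hSrec 0
    rw [hS0, if_neg (by norm_num)] at this
    rw [this]; exact hη _
  -- nonemptiness
  have hne : ∀ n : ℕ, ∃ k, 1 ≤ k ∧ n ≤ k - T k ∧ 0 < S k := by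
    intro n
    induction n with
    | zero => exact ⟨1, le_refl 1, Nat.zero_le _, hS1⟩
    | succ n ih =>
      obtain ⟨k, hk1, hkn, hkS⟩ := ih
      obtain ⟨m, rfl⟩ : ∃ m, k = m + 1 := ⟨k - 1, by omega⟩
      have hk : (m + 1) - T (m + 1) = (P m).card := (key m).1
      by_cases hpos : 0 < S (m + 2)
      · refine ⟨m + 2, by omega, ?_, hpos⟩
        have h2 : (m + 2) - T (m + 2) = (P (m + 1)).card := (key (m + 1)).1
        have e1 : (P (m + 1)).card = (P m).card + 1 := steppos m hkS
        omega
      · have e3 : 0 < S (m + 3) := by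
          have h := hSrec (m + 2)
          rw [if_neg hpos] at h
          rw [h]; exact hη _
        refine ⟨m + 3, by omega, ?_, e3⟩
        have h2 : (m + 3) - T (m + 3) = (P (m + 2)).card := (key (m + 2)).1
        have e1 : (P (m + 1)).card = (P m).card + 1 := steppos m hkS
        have e2 : (P (m + 2)).card = (P (m + 1)).card := stepneg (m + 1) hpos
        omega
  intro n
  set A : Set ℕ := {k : ℕ | 1 ≤ k ∧ n ≤ k - T k ∧ 0 < S k} with hA
  have hAne : A.Nonempty := hne n
  have hmem : lam n ∈ A := by rw [hlam]; exact Nat.sInf_mem hAne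
  obtain ⟨hk1, hkn, hkS⟩ := hmem
  by_contra hcon
  have hgt : n + 1 ≤ lam n - T (lam n) := by omega
  obtain ⟨m, hm⟩ : ∃ m, lam n = m + 1 := ⟨lam n - 1, by omega⟩
  have hk : (m + 1) - T (m + 1) = (P m).card := (key m).1
  rw [hm] at hgt
  have hPcard : n + 1 ≤ (P m).card := by omega
  have hPne : (P m).Nonempty := Finset.card_pos.mp (by omega)
  set j := (P m).max' hPne with hj
  have hjmem : j ∈ P m := (P m).max'_mem hPne
  have hjprop : j ∈ Finset.Icc 1 m ∧ 0 < S j := by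
    simpa [hP] using hjmem
  have hj1 : 1 ≤ j := (Finset.mem_Icc.mp hjprop.1).1
  have hjm : j ≤ m := (Finset.mem_Icc.mp hjprop.1).2
  have hsplit : P m = insert j (P (j - 1)) := by
    ext i
    simp only [Finset.mem_insert, hP, Finset.mem_filter, Finset.mem_Icc]
    constructor
    · rintro ⟨⟨hi1, him⟩, hiS⟩
      by_cases hij : i = j
      · exact Or.inl hij
      · have : i ≤ j := Finset.le_max' _ i (by simp [hP, Finset.mem_Icc]; exact ⟨⟨hi1, him⟩, hiS⟩)
        exact Or.inr ⟨⟨hi1, by omega⟩, hiS⟩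
    · rintro (rfl | ⟨⟨hi1, hij⟩, hiS⟩)
      · exact ⟨⟨hj1, hjm⟩, hjprop.2⟩
      · exact ⟨⟨hi1, by omega⟩, hiS⟩
  have hjnot : j ∉ P (j - 1) := by
    simp [hP, Finset.mem_Icc]; intro h; omega
  have hcards : (P m).card = (P (j - 1)).card + 1 := by
    rw [hsplit, Finset.card_insert_of_notMem hjnot]
  have hkeyj := (key (j - 1)).1
  have hjeq : j - 1 + 1 = j := by omega
  rw [hjeq] at hkeyj
  have hjA : j ∈ A := ⟨hj1, by omega, hjprop.2⟩
  have : lam n ≤ j := by rw [hlam]; exact Nat.sInf_le hjA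
  omega
end
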